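/- The second regularized smoothing factor has the limiting behavior: for every δ > 0, the function r ↦ s₂(r/δ)/r³, defined for r ≠ 0, tends to 32/(3δ³√π) as r → 0. -/

import Mathlib

open Real Filter Topology

/-- The error function erf(r) = (2/√π)·∫₀ʳ exp(−t²) dt. -/
noncomputable def erf (r : ℝ) : ℝ := (2 / Real.sqrt π) * ∫ t in (0 : ℝ)..r, Real.exp (-t ^ 2)

/-- The first smoothing factor s₁. -/
noncomputable def s₁ (r : ℝ) : ℝ :=
  erf r - (2 / 3) * r * (2 * r ^ 2 - 5) * Real.exp (-r ^ 2) / Real.sqrt π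

/-- The second smoothing factor s₂. -/
noncomputable def s₂ (r : ℝ) : ℝ :=
  erf r - (2 / 3) * r * (4 * r ^ 4 - 14 * r ^ 2 + 3) * Real.exp (-r ^ 2) / Real.sqrt π

/-!
The derivative of `s₂` is `16/(3√π) · x² (6 − 6x² + x⁴) e^{−x²}`, which vanishes to second
order at `0`; since also `s₂ 0 = 0`, L'Hôpital's rule gives `s₂ x / x³ → 32/(3√π)`, and the
substitution `x = r/δ` scales the limit by `δ⁻³`.
-/

lemma hasDerivAt_erf (x : ℝ) : HasDerivAt erf (2 / √π * exp (-x ^ 2)) x :=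
  ((continuous_exp.comp (continuous_pow 2).neg).integral_hasStrictDerivAt 0 x).hasDerivAt.const_mul _

lemma hasDerivAt_s₂ (x : ℝ) :
    HasDerivAt s₂ (16 / (3 * √π) * x ^ 2 * (6 - 6 * x ^ 2 + x ^ 4) * exp (-x ^ 2)) x := by
  have hcubic : HasDerivAt (fun r : ℝ => 4 * r ^ 4 - 14 * r ^ 2 + 3) (16 * x ^ 3 - 28 * x) x :=
    ((((hasDerivAt_pow 4 x).const_mul 4).sub ((hasDerivAt_pow 2 x).const_mul 14)).add_const
      3).congr_deriv (by push_cast; ring)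
  have hgauss : HasDerivAt (fun r : ℝ => exp (-r ^ 2)) (exp (-x ^ 2) * -(2 * x)) x :=
    ((hasDerivAt_pow 2 x).neg.congr_deriv (by push_cast; ring)).exp
  have hprod := ((((hasDerivAt_id x).const_mul (2 / 3 : ℝ)).mul hcubic).mul hgauss).div_const √π
  have : √π ≠ 0 := by positivity
  exact ((hasDerivAt_erf x).sub hprod).congr_deriv (by simp only [id, Pi.mul_apply]; field_simp; ring)

lemma s₂_zero : s₂ 0 = 0 := by
  simp [s₂, erf]

lemma tendsto_s₂_div_pow_three :
    Tendsto (fun x : ℝ => s₂ x / x ^ 3) (𝓝[≠] 0) (𝓝 (32 / (3 * √π))) := by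
  have hquot : Tendsto (fun x : ℝ => 16 / (9 * √π) * (6 - 6 * x ^ 2 + x ^ 4) * exp (-x ^ 2))
      (𝓝[≠] 0) (𝓝 (32 / (3 * √π))) := by
    have hcont : Continuous fun x : ℝ => 16 / (9 * √π) * (6 - 6 * x ^ 2 + x ^ 4) * exp (-x ^ 2) := by
      fun_prop
    convert (hcont.tendsto 0).mono_left nhdsWithin_le_nhds using 2
    norm_num
    ring
  refine HasDerivAt.lhopital_zero_nhdsNE (.of_forall hasDerivAt_s₂)
    (.of_forall fun x => hasDerivAt_pow 3 x) ?_ ?_ ?_ (hquot.congr' ?_)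
  · filter_upwards [self_mem_nhdsWithin] with x (hx : x ≠ 0)
    positivity
  · simpa [s₂_zero] using tendsto_nhdsWithin_of_tendsto_nhds (hasDerivAt_s₂ 0).continuousAt.tendsto
  · simpa using tendsto_nhdsWithin_of_tendsto_nhds ((continuous_pow 3).tendsto (0 : ℝ))
  · filter_upwards [self_mem_nhdsWithin] with x (hx : x ≠ 0)
    field_simp
    push_cast
    ring

lemma tendsto_div_const_nhdsNE {δ : ℝ} (hδ : δ ≠ 0) :
    Tendsto (fun r : ℝ => r / δ) (𝓝[≠] 0) (𝓝[≠] 0) := by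
  refine tendsto_nhdsWithin_iff.mpr ⟨?_, ?_⟩
  · simpa using tendsto_nhdsWithin_of_tendsto_nhds ((continuous_id.div_const δ).tendsto 0)
  · filter_upwards [self_mem_nhdsWithin] with r (hr : r ≠ 0)
    exact div_ne_zero hr hδ

/-- For every δ > 0, s₂(r/δ)/r³ tends to 32/(3δ³√π) as r → 0 (r ≠ 0). -/
theorem s2_limit_at_zero (δ : ℝ) (hδ : 0 < δ) :
    Tendsto (fun r : ℝ => s₂ (r / δ) / r ^ 3) (𝓝[≠] 0)
      (𝓝 (32 / (3 * δ ^ 3 * Real.sqrt π))) := by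
  have hscaled := (tendsto_s₂_div_pow_three.comp (tendsto_div_const_nhdsNE hδ.ne')).div_const (δ ^ 3)
  convert hscaled using 1
  · ext r
    rw [Function.comp_apply, div_pow, div_div, div_mul_cancel₀ _ (pow_ne_zero 3 hδ.ne')]
  · rw [div_div]
    ring_nf
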